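/- Let ρ, r₁, …, r_{d-1} be positive reals with ρ ≤ rᵢ ≤ 1 for all i. Define F(r;ρ) = { y ∈ ℝ^d : |yᵢ| < ρ/rᵢ for 1 ≤ i ≤ d-1, dist(y, S^{d-1}) < ρ, y_d < 0 }. Then |F(r;ρ)| is comparable (with constants depending only on d) to ρ·∏_{i=1}^{d-1} (ρ/rᵢ) = ρ^d / ∏ rᵢ. -/

import Mathlib

/-!
Write `y = (z, t)` with `t = y_d` and `wᵢ = ρ/rᵢ`. Then `F(r;ρ)` is the part of the shell
`1 - ρ < |y| < 1 + ρ` lying in `{t < 0}` above the box `|zᵢ| < wᵢ`.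

Lower bound: over every `z` with `|z|² ≤ 1` the vertical fibre contains an interval of length `ρ`
just below the sphere; apply this on the box shrunk by the factor `1/d`.

Upper bound: if every `wᵢ ≤ 1/d`, then `|z|² ≤ 1/2` on the box, the shell is crossed
transversally and each fibre has length at most `8ρ`. Otherwise some `wᵢ > 1/d`; pairing `zᵢ` with
`t`, every planar slice lies in an annulus of area `π((1+ρ)² - (1-ρ)²) = 4πρ`, which loses at most
the factor `d·wᵢ` against the volume of the box.
-/

open MeasureTheory

/-- The dual curved box `F(r;ρ)`: a `ρ`-neighborhood of a cap of the unit sphere near the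
south pole, with perpendicular radii `ρ/rᵢ`.  Here `d = n+1`. -/
def curvedBoxF (n : ℕ) (r : Fin n → ℝ) (ρ : ℝ) : Set (EuclideanSpace ℝ (Fin (n + 1))) :=
  {y | (∀ i : Fin n, |y i.castSucc| < ρ / r i) ∧
    Metric.infDist y (Metric.sphere (0 : EuclideanSpace ℝ (Fin (n + 1))) 1) < ρ ∧
    y (Fin.last n) < 0}

open Metric Set Real

lemma infDist_sphere_zero {E : Type*} [NormedAddCommGroup E] [NormedSpace ℝ E] [Nontrivial E]
    (x : E) {r : ℝ} (hr : 0 ≤ r) : infDist x (sphere (0 : E) r) = |‖x‖ - r| := by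
  have hne : (sphere (0 : E) r).Nonempty := NormedSpace.sphere_nonempty.2 hr
  refine le_antisymm ?_ ((le_infDist hne).2 fun z hz => ?_)
  · obtain ⟨z, hz, hxz⟩ : ∃ z ∈ sphere (0 : E) r, dist x z = |‖x‖ - r| := by
      rcases eq_or_ne x 0 with rfl | hx
      · obtain ⟨z, hz⟩ := hne
        refine ⟨z, hz, ?_⟩
        rw [mem_sphere_zero_iff_norm] at hz
        simp [hz, abs_of_nonneg hr]
      · have hx' : 0 < ‖x‖ := norm_pos_iff.2 hx
        refine ⟨(r / ‖x‖) • x, ?_, ?_⟩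
        · simp [norm_smul, hx'.ne', abs_of_nonneg hr]
        · rw [dist_eq_norm, show ‖x‖ - r = (1 - r / ‖x‖) * ‖x‖ by field_simp, abs_mul, abs_norm,
            ← Real.norm_eq_abs, ← norm_smul, sub_smul, one_smul]
    exact hxz ▸ infDist_le_dist_of_mem hz
  · rw [mem_sphere_zero_iff_norm] at hz
    simpa [hz, dist_eq_norm] using abs_norm_sub_norm_le x z

lemma abs_sqrt_sub_one_lt_of_mem_Ioo {ρ q t : ℝ} (hq : 0 ≤ q) (hq1 : q ≤ 1)
    (ht : t ∈ Ioo (-√(1 - q) - ρ) (-√(1 - q))) : t < 0 ∧ |√(q + t ^ 2) - 1| < ρ := by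
  obtain ⟨hlo, hhi⟩ := ht
  have hs := Real.sq_sqrt (sub_nonneg.2 hq1)
  have hs0 := Real.sqrt_nonneg (1 - q)
  have hs1 : √(1 - q) ≤ 1 := Real.sqrt_le_one.2 (by linarith)
  refine ⟨by linarith, abs_sub_lt_iff.2 ⟨?_, ?_⟩⟩
  · rw [sub_lt_iff_lt_add', Real.sqrt_lt' (by linarith)]
    nlinarith
  · have : 1 < √(q + t ^ 2) := Real.lt_sqrt zero_le_one |>.2 (by nlinarith)
    linarith

lemma mem_Ioo_of_abs_sqrt_sub_one_lt {ρ q t : ℝ} (hq : 0 ≤ q) (hq2 : q ≤ 1 / 2) (ht : t < 0)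
    (h : |√(q + t ^ 2) - 1| < ρ) :
    t ∈ Ioo (-√((1 + ρ) ^ 2 - q)) (-√((1 + ρ) ^ 2 - q) + 8 * ρ) := by
  obtain ⟨h1, h2⟩ := abs_sub_lt_iff.1 h
  set s := √(q + t ^ 2)
  have hs : s ^ 2 = q + t ^ 2 := Real.sq_sqrt (by positivity)
  have hs0 : 0 ≤ s := Real.sqrt_nonneg _
  set U := √((1 + ρ) ^ 2 - q)
  have hU : U ^ 2 = (1 + ρ) ^ 2 - q := Real.sq_sqrt (by nlinarith)
  have hU0 : 0 ≤ U := Real.sqrt_nonneg _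
  have hρ : 0 < ρ := by linarith
  have htU : t ^ 2 < U ^ 2 := by nlinarith
  constructor
  · nlinarith
  · rcases le_or_gt (1 / 7) ρ with hρ7 | hρ7
    · have : U ≤ 1 + ρ := by nlinarith
      linarith
    · have hU2 : 1 / 2 ≤ U := by nlinarith
      have hgap : U ^ 2 - t ^ 2 < 4 * ρ := by nlinarith
      nlinarith

lemma mem_Ioo_sq_of_abs_sqrt_sub_one_lt {ρ x : ℝ} (hρ1 : ρ ≤ 1) (hx : 0 ≤ x)
    (h : |√x - 1| < ρ) : x ∈ Ioo ((1 - ρ) ^ 2) ((1 + ρ) ^ 2) := by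
  obtain ⟨h1, h2⟩ := abs_sub_lt_iff.1 h
  have hs : √x ^ 2 = x := Real.sq_sqrt hx
  constructor <;> nlinarith [Real.sqrt_nonneg x]

section Measure

variable {α β : Type*} [MeasurableSpace α] [MeasurableSpace β]

lemma volume_regionBetween_add_const {μ : Measure α} {f : α → ℝ} (hf : Measurable f)
    {s : Set α} (hs : MeasurableSet s) (c : ℝ) :
    μ.prod volume (regionBetween f (fun x => f x + c) s) = ENNReal.ofReal c * μ s := by
  rw [volume_regionBetween_eq_lintegral' hf (hf.add_const c) hs]
  simp

lemma MeasureTheory.Measure.prod_le_mul_of_measure_preimage_prodMk_le {μ : Measure α}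
    {ν : Measure β} [SFinite ν] {s : Set (α × β)} (hs : MeasurableSet s) {t : Set α}
    (ht : MeasurableSet t) (hst : s ⊆ t ×ˢ univ) {c : ENNReal}
    (hc : ∀ x ∈ t, ν (Prod.mk x ⁻¹' s) ≤ c) :
    μ.prod ν s ≤ c * μ t := by
  rw [Measure.prod_apply hs, ← lintegral_indicator_const ht]
  refine lintegral_mono fun x => ?_
  by_cases hx : x ∈ t
  · simpa [hx] using hc x hx
  · have : Prod.mk x ⁻¹' s = ∅ := eq_empty_of_forall_notMem fun y hy => hx (hst hy).1
    simp [hx, this]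

lemma volume_sq_add_sq_lt (b : ℝ) :
    volume {v : ℝ × ℝ | v.1 ^ 2 + v.2 ^ 2 < b} = ENNReal.ofReal (π * b) := by
  have hS : MeasurableSet {v : ℝ × ℝ | v.1 ^ 2 + v.2 ^ 2 < b} :=
    measurableSet_lt (by fun_prop) measurable_const
  have hball : Complex.measurableEquivRealProd ⁻¹' {v : ℝ × ℝ | v.1 ^ 2 + v.2 ^ 2 < b} =
      ball (0 : ℂ) √b := by
    ext z
    simp only [mem_preimage, Complex.measurableEquivRealProd_apply, mem_ofPred_eq,
      mem_ball_zero_iff, Real.lt_sqrt (norm_nonneg z), Complex.sq_norm, Complex.normSq_apply, ← sq]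
  rw [← Complex.volume_preserving_equiv_real_prod.measure_preimage hS.nullMeasurableSet, hball,
    Complex.volume_ball, ← ENNReal.ofReal_pow (Real.sqrt_nonneg b), Real.sq_sqrt',
    ENNReal.ofReal_max, ENNReal.ofReal_zero, max_eq_left zero_le,
    ENNReal.ofReal_mul Real.pi_pos.le, mul_comm, ← NNReal.coe_real_pi, ENNReal.ofReal_coe_nnreal]

lemma volume_annulus_le (a b : ℝ) :
    volume {v : ℝ × ℝ | a < v.1 ^ 2 + v.2 ^ 2 ∧ v.1 ^ 2 + v.2 ^ 2 < b} ≤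
      ENNReal.ofReal (π * (b - a)) := by
  rcases le_or_gt b a with hba | hab
  · have : {v : ℝ × ℝ | a < v.1 ^ 2 + v.2 ^ 2 ∧ v.1 ^ 2 + v.2 ^ 2 < b} = ∅ :=
      eq_empty_of_forall_notMem fun v hv => by linarith [hv.1, hv.2]
    simp [this]
  · have hsub : {v : ℝ × ℝ | v.1 ^ 2 + v.2 ^ 2 < a} ⊆ {v | v.1 ^ 2 + v.2 ^ 2 < b} :=
      fun v hv => lt_trans hv hab
    calc volume {v : ℝ × ℝ | a < v.1 ^ 2 + v.2 ^ 2 ∧ v.1 ^ 2 + v.2 ^ 2 < b}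
        ≤ volume ({v : ℝ × ℝ | v.1 ^ 2 + v.2 ^ 2 < b} \ {v | v.1 ^ 2 + v.2 ^ 2 < a}) :=
          measure_mono fun v hv => ⟨hv.2, not_lt.2 hv.1.le⟩
      _ = ENNReal.ofReal (π * b) - ENNReal.ofReal (π * a) := by
          rw [measure_sdiff hsub (measurableSet_lt (by fun_prop) measurable_const).nullMeasurableSet
            (by simp [volume_sq_add_sq_lt]), volume_sq_add_sq_lt, volume_sq_add_sq_lt]
      _ ≤ ENNReal.ofReal (π * (b - a)) := by
          rw [tsub_le_iff_right, mul_sub]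
          simpa using ENNReal.ofReal_add_le (p := π * b - π * a) (q := π * a)

end Measure

section Coordinates

variable {n : ℕ}

def sumSq (z : Fin n → ℝ) : ℝ := ∑ i, z i ^ 2

lemma sumSq_nonneg (z : Fin n → ℝ) : 0 ≤ sumSq z :=
  Finset.sum_nonneg fun i _ => sq_nonneg (z i)

@[fun_prop]
lemma measurable_sumSq : Measurable (sumSq (n := n)) := by
  unfold sumSq; fun_prop

lemma sumSq_eq_sq_add_sumSq_removeNth (z : Fin (n + 1) → ℝ) (i : Fin (n + 1)) :
    sumSq z = z i ^ 2 + sumSq (i.removeNth z) :=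
  Fin.sum_univ_succAbove _ i

def box (w : Fin n → ℝ) : Set (Fin n → ℝ) := univ.pi fun i => Ioo (-w i) (w i)

lemma mem_box {w z : Fin n → ℝ} : z ∈ box w ↔ ∀ i, |z i| < w i := by
  simp [box, abs_lt]

lemma box_mono {v w : Fin n → ℝ} (h : ∀ i, v i ≤ w i) : box v ⊆ box w :=
  Set.pi_mono fun i _ => Ioo_subset_Ioo (neg_le_neg (h i)) (h i)

lemma measurableSet_box (w : Fin n → ℝ) : MeasurableSet (box w) :=
  .univ_pi fun _ => measurableSet_Ioo

lemma volume_box {w : Fin n → ℝ} (hw : ∀ i, 0 ≤ w i) :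
    volume (box w) = ENNReal.ofReal (∏ i, 2 * w i) := by
  simp_rw [box, volume_pi_pi, Real.volume_Ioo, sub_neg_eq_add, ← two_mul]
  exact (ENNReal.ofReal_prod_of_nonneg fun i _ => by linarith [hw i]).symm

lemma sumSq_le_half_of_mem_box {w z : Fin n → ℝ} (hw : ∀ i, w i ≤ ((n : ℝ) + 1)⁻¹)
    (hz : z ∈ box w) : sumSq z ≤ 1 / 2 := by
  have hzi : ∀ i, z i ^ 2 ≤ ((n : ℝ) + 1)⁻¹ ^ 2 := fun i =>
    sq_le_sq' (by linarith [neg_abs_le (z i), mem_box.1 hz i, hw i])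
      (by linarith [le_abs_self (z i), mem_box.1 hz i, hw i])
  calc sumSq z ≤ ∑ _i : Fin n, ((n : ℝ) + 1)⁻¹ ^ 2 := Finset.sum_le_sum fun i _ => hzi i
    _ = n / (n + 1) ^ 2 := by simp [div_eq_mul_inv]
    _ ≤ 1 / 2 := by
      rw [div_le_div_iff₀ (by positivity) two_pos]
      nlinarith [sq_nonneg ((n : ℝ) - 1)]

/-- `F(r;ρ)` in the coordinates `y ↦ ((y₁, …, y_{d-1}), y_d)`, with half-widths `wᵢ = ρ/rᵢ`. -/
def shellCap (w : Fin n → ℝ) (ρ : ℝ) : Set ((Fin n → ℝ) × ℝ) :=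
  {p | p.1 ∈ box w ∧ p.2 < 0 ∧ |√(sumSq p.1 + p.2 ^ 2) - 1| < ρ}

lemma measurableSet_shellCap (w : Fin n → ℝ) (ρ : ℝ) : MeasurableSet (shellCap w ρ) :=
  (measurable_fst (measurableSet_box w)).inter <|
    (measurableSet_lt measurable_snd measurable_const).inter <|
      measurableSet_lt (f := fun p : (Fin n → ℝ) × ℝ => |√(sumSq p.1 + p.2 ^ 2) - 1|)
        (by fun_prop) measurable_const

lemma measurePreserving_init_last :
    MeasurePreserving (fun y : Fin (n + 1) → ℝ => (Fin.init y, y (Fin.last n))) volume volume := by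
  have he : (fun y : Fin (n + 1) → ℝ => (Fin.init y, y (Fin.last n))) =
      Prod.swap ∘ MeasurableEquiv.piFinSuccAbove (fun _ => ℝ) (Fin.last n) := by
    ext y <;> simp
  rw [he, Measure.volume_eq_prod]
  exact Measure.measurePreserving_swap.comp
    (volume_preserving_piFinSuccAbove (fun _ : Fin (n + 1) => ℝ) (Fin.last n))

lemma curvedBoxF_eq_preimage (r : Fin n → ℝ) (ρ : ℝ) :
    curvedBoxF n r ρ = (fun y : EuclideanSpace ℝ (Fin (n + 1)) => (Fin.init y, y (Fin.last n))) ⁻¹'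
      shellCap (fun i => ρ / r i) ρ := by
  ext y
  have hnorm : ‖y‖ = √(sumSq (Fin.init y) + y (Fin.last n) ^ 2) := by
    rw [EuclideanSpace.norm_eq, sumSq, Fin.sum_univ_castSucc]
    simp [Fin.init]
  simp only [curvedBoxF, shellCap, mem_ofPred_eq, mem_preimage, mem_box,
    infDist_sphere_zero y zero_le_one, hnorm, Fin.init]
  tauto

lemma volume_curvedBoxF (r : Fin n → ℝ) (ρ : ℝ) :
    volume (curvedBoxF n r ρ) = volume (shellCap (fun i => ρ / r i) ρ) := by
  rw [curvedBoxF_eq_preimage]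
  exact (measurePreserving_init_last.comp (PiLp.volume_preserving_ofLp _)).measure_preimage
    (measurableSet_shellCap _ _).nullMeasurableSet

lemma measurePreserving_removeNth_prod {m : ℕ} (i : Fin (m + 1)) :
    MeasurePreserving (fun p : (Fin (m + 1) → ℝ) × ℝ => (i.removeNth p.1, (p.1 i, p.2)))
      volume volume := by
  have he : (fun p : (Fin (m + 1) → ℝ) × ℝ => (i.removeNth p.1, (p.1 i, p.2))) =
      MeasurableEquiv.prodAssoc ∘
        Prod.map (Prod.swap ∘ MeasurableEquiv.piFinSuccAbove (fun _ => ℝ) i) id := by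
    ext p <;> rfl
  simp only [he, Measure.volume_eq_prod]
  exact (measurePreserving_prodAssoc _ _ _).comp <|
    (Measure.measurePreserving_swap.comp
      (volume_preserving_piFinSuccAbove (fun _ : Fin (m + 1) => ℝ) i)).prod (.id _)

end Coordinates

section ShellCap

variable {n : ℕ}

lemma ofReal_mul_volume_le_volume_shellCap {w : Fin n → ℝ} {ρ : ℝ} {s : Set (Fin n → ℝ)}
    (hs : MeasurableSet s) (hsw : s ⊆ box w) (hs1 : ∀ z ∈ s, sumSq z ≤ 1) :
    ENNReal.ofReal ρ * volume s ≤ volume (shellCap w ρ) := by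
  set f : (Fin n → ℝ) → ℝ := fun z => -√(1 - sumSq z) - ρ
  have hsub : regionBetween f (fun z => f z + ρ) s ⊆ shellCap w ρ := by
    rintro ⟨z, t⟩ ⟨hz, ht⟩
    obtain ⟨ht0, htρ⟩ := abs_sqrt_sub_one_lt_of_mem_Ioo (sumSq_nonneg z) (hs1 z hz)
      (by simpa [f] using ht)
    exact ⟨hsw hz, ht0, htρ⟩
  calc ENNReal.ofReal ρ * volume s = volume (regionBetween f (fun z => f z + ρ) s) := by
        rw [Measure.volume_eq_prod, volume_regionBetween_add_const (by fun_prop) hs]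
    _ ≤ volume (shellCap w ρ) := measure_mono hsub

lemma ofReal_le_volume_shellCap {w : Fin n → ℝ} {ρ : ℝ} (hρ : 0 < ρ)
    (hw : ∀ i, 0 ≤ w i ∧ w i ≤ 1) :
    ENNReal.ofReal ((2 / ((n : ℝ) + 1)) ^ n * (ρ * ∏ i, w i)) ≤ volume (shellCap w ρ) := by
  set v : Fin n → ℝ := fun i => ((n : ℝ) + 1)⁻¹ * w i
  have hv : ∀ i, 0 ≤ v i ∧ v i ≤ w i ∧ v i ≤ ((n : ℝ) + 1)⁻¹ := fun i => by
    have hn : ((n : ℝ) + 1)⁻¹ ≤ 1 := inv_le_one_of_one_le₀ (by simp)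
    exact ⟨by positivity [(hw i).1], mul_le_of_le_one_left (hw i).1 hn,
      mul_le_of_le_one_right (by positivity) (hw i).2⟩
  calc ENNReal.ofReal ((2 / ((n : ℝ) + 1)) ^ n * (ρ * ∏ i, w i))
      = ENNReal.ofReal ρ * volume (box v) := by
        rw [volume_box fun i => (hv i).1, ← ENNReal.ofReal_mul hρ.le]
        simp only [v, Finset.prod_mul_distrib, Finset.prod_const, Finset.card_univ,
          Fintype.card_fin]
        ring_nf
    _ ≤ volume (shellCap w ρ) :=
        ofReal_mul_volume_le_volume_shellCap (measurableSet_box v)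
          (box_mono fun i => (hv i).2.1)
          fun z hz => (sumSq_le_half_of_mem_box (fun i => (hv i).2.2) hz).trans (by norm_num)

lemma volume_shellCap_le_of_sumSq_le {w : Fin n → ℝ} {ρ : ℝ}
    (hw : ∀ z ∈ box w, sumSq z ≤ 1 / 2) :
    volume (shellCap w ρ) ≤ ENNReal.ofReal (8 * ρ) * volume (box w) := by
  set f : (Fin n → ℝ) → ℝ := fun z => -√((1 + ρ) ^ 2 - sumSq z)
  have hsub : shellCap w ρ ⊆ regionBetween f (fun z => f z + 8 * ρ) (box w) := by
    rintro ⟨z, t⟩ ⟨hz, ht0, ht⟩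
    exact ⟨hz, mem_Ioo_of_abs_sqrt_sub_one_lt (sumSq_nonneg z) (hw z hz) ht0 ht⟩
  calc volume (shellCap w ρ) ≤ volume (regionBetween f (fun z => f z + 8 * ρ) (box w)) :=
        measure_mono hsub
    _ = ENNReal.ofReal (8 * ρ) * volume (box w) := by
        rw [Measure.volume_eq_prod,
          volume_regionBetween_add_const (by fun_prop) (measurableSet_box w)]

lemma volume_shellCap_le_of_le_one {m : ℕ} {w : Fin (m + 1) → ℝ} {ρ : ℝ} (hρ1 : ρ ≤ 1)
    (i : Fin (m + 1)) :
    volume (shellCap w ρ) ≤ ENNReal.ofReal (4 * π * ρ) * volume (box (w ∘ i.succAbove)) := by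
  set Q : Set ((Fin m → ℝ) × (ℝ × ℝ)) := {p | p.1 ∈ box (w ∘ i.succAbove) ∧
    (1 - ρ) ^ 2 - sumSq p.1 < p.2.1 ^ 2 + p.2.2 ^ 2 ∧
    p.2.1 ^ 2 + p.2.2 ^ 2 < (1 + ρ) ^ 2 - sumSq p.1}
  have hQ : MeasurableSet Q := by
    have hq : Measurable fun p : (Fin m → ℝ) × (ℝ × ℝ) => sumSq p.1 := by fun_prop
    have hv : Measurable fun p : (Fin m → ℝ) × (ℝ × ℝ) => p.2.1 ^ 2 + p.2.2 ^ 2 := by fun_prop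
    exact (measurable_fst (measurableSet_box _)).inter <|
      (measurableSet_lt (hq.const_sub _) hv).inter (measurableSet_lt hv (hq.const_sub _))
  have hsub : shellCap w ρ ⊆
      (fun p : (Fin (m + 1) → ℝ) × ℝ => (i.removeNth p.1, (p.1 i, p.2))) ⁻¹' Q := by
    rintro ⟨z, t⟩ ⟨hz, -, ht⟩
    have hzt := mem_Ioo_sq_of_abs_sqrt_sub_one_lt hρ1 (by positivity [sumSq_nonneg z]) ht
    rw [sumSq_eq_sq_add_sumSq_removeNth z i] at hzt
    exact ⟨mem_box.2 fun j => mem_box.1 hz _, by linarith [hzt.1], by linarith [hzt.2]⟩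
  calc volume (shellCap w ρ)
      ≤ volume ((fun p : (Fin (m + 1) → ℝ) × ℝ => (i.removeNth p.1, (p.1 i, p.2))) ⁻¹' Q) :=
        measure_mono hsub
    _ = volume Q := (measurePreserving_removeNth_prod i).measure_preimage hQ.nullMeasurableSet
    _ ≤ ENNReal.ofReal (4 * π * ρ) * volume (box (w ∘ i.succAbove)) := by
        rw [Measure.volume_eq_prod]
        refine Measure.prod_le_mul_of_measure_preimage_prodMk_le hQ (measurableSet_box _)
          (fun p hp => ⟨hp.1, trivial⟩) fun u _ => ?_
        calc volume (Prod.mk u ⁻¹' Q)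
            ≤ volume {v : ℝ × ℝ | (1 - ρ) ^ 2 - sumSq u < v.1 ^ 2 + v.2 ^ 2 ∧
                v.1 ^ 2 + v.2 ^ 2 < (1 + ρ) ^ 2 - sumSq u} := measure_mono fun v hv => hv.2
          _ ≤ ENNReal.ofReal (4 * π * ρ) := (volume_annulus_le _ _).trans_eq (by ring_nf)

lemma volume_shellCap_le {r : Fin n → ℝ} {ρ : ℝ} (hρ : 0 < ρ) (hr : ∀ i, ρ ≤ r i ∧ r i ≤ 1) :
    volume (shellCap (fun i => ρ / r i) ρ) ≤
      ENNReal.ofReal (8 * (n + 1) * ρ) * volume (box fun i => ρ / r i) := by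
  set w : Fin n → ℝ := fun i => ρ / r i
  have hw : ∀ i, 0 < w i := fun i => div_pos hρ (hρ.trans_le (hr i).1)
  by_cases hsmall : ∀ i, w i ≤ ((n : ℝ) + 1)⁻¹
  · calc volume (shellCap w ρ) ≤ ENNReal.ofReal (8 * ρ) * volume (box w) :=
          volume_shellCap_le_of_sumSq_le fun z hz => sumSq_le_half_of_mem_box hsmall hz
      _ ≤ ENNReal.ofReal (8 * (n + 1) * ρ) * volume (box w) := by
          gcongr
          nlinarith [(n.cast_nonneg : (0 : ℝ) ≤ n)]
  · push Not at hsmall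
    obtain ⟨i, hi⟩ := hsmall
    obtain ⟨m, rfl⟩ := Nat.exists_eq_add_one_of_ne_zero i.pos.ne'
    have hi' : 1 < w i * ((m + 1 : ℕ) + 1 : ℝ) := by
      rwa [inv_lt_iff_one_lt_mul₀ (by positivity)] at hi
    calc volume (shellCap w ρ)
        ≤ ENNReal.ofReal (4 * π * ρ) * volume (box (w ∘ i.succAbove)) :=
          volume_shellCap_le_of_le_one ((hr i).1.trans (hr i).2) i
      _ ≤ ENNReal.ofReal (8 * ((m + 1 : ℕ) + 1) * ρ) * volume (box w) := by
          rw [volume_box (w := w ∘ i.succAbove) fun j => (hw _).le,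
            volume_box fun j => (hw j).le,
            Fin.prod_univ_succAbove _ i, ← ENNReal.ofReal_mul (by positivity),
            ← ENNReal.ofReal_mul (by positivity)]
          refine ENNReal.ofReal_le_ofReal ?_
          have hP : 0 ≤ ∏ j, 2 * w (i.succAbove j) :=
            Finset.prod_nonneg fun j _ => by positivity [hw (i.succAbove j)]
          simp only [Function.comp_apply]
          nlinarith [pi_le_four, mul_nonneg hρ.le hP,
            mul_le_mul_of_nonneg_left hi'.le (mul_nonneg hρ.le hP)]

end ShellCap

/-- `|F(r;ρ)| ∼ ρ·∏ (ρ/rᵢ)`, with constants depending only on the dimension. -/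
theorem stmt_3 (n : ℕ) :
    ∃ c C : ℝ, 0 < c ∧ 0 < C ∧
      ∀ (ρ : ℝ) (r : Fin n → ℝ), 0 < ρ → (∀ i, ρ ≤ r i ∧ r i ≤ 1) →
        ENNReal.ofReal (c * (ρ * ∏ i, ρ / r i)) ≤ volume (curvedBoxF n r ρ) ∧
        volume (curvedBoxF n r ρ) ≤ ENNReal.ofReal (C * (ρ * ∏ i, ρ / r i)) := by
  refine ⟨(2 / ((n : ℝ) + 1)) ^ n, 8 * ((n : ℝ) + 1) * 2 ^ n, by positivity, by positivity,
    fun ρ r hρ hr => ?_⟩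
  have hw : ∀ i, 0 ≤ ρ / r i ∧ ρ / r i ≤ 1 := fun i =>
    ⟨div_nonneg hρ.le (hρ.le.trans (hr i).1), div_le_one_of_le₀ (hr i).1 (hρ.le.trans (hr i).1)⟩
  rw [volume_curvedBoxF]
  refine ⟨ofReal_le_volume_shellCap hρ hw, (volume_shellCap_le hρ hr).trans_eq ?_⟩
  rw [volume_box fun i => (hw i).1, ← ENNReal.ofReal_mul (by positivity)]
  simp only [Finset.prod_mul_distrib, Finset.prod_const, Finset.card_univ, Fintype.card_fin]
  ring_nf
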